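/- If 1 → F → G → Q → 1 is a short exact sequence of groups where F is a free group of rank ≥ 2 and Q has trivial center, then G has trivial center. -/

import Mathlib

/-!
A central element of `G` maps into the center of `Q`, which is trivial, so it lies in the
kernel `F`, where it is central in `F`. A free group on at least two generators has trivial
center: if the reduced word `L` of `w ≠ 1` starts with a letter on the generator `a`, pick a
letter `x` on a generator `c ≠ a` that does not cancel against the last letter of `L`; then
`x * w` and `w * x` have the different reduced words `x :: L` and `L ++ [x]`.
-/

namespace Subgroup

variable {G H : Type*} [Group G] [Group H]

theorem center_le_comap_center_of_surjective {f : G →* H} (hf : Function.Surjective f) :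
    center G ≤ (center H).comap f := by
  intro z hz
  rw [mem_comap, mem_center_iff]
  intro h
  obtain ⟨g, rfl⟩ := hf h
  rw [← map_mul, ← map_mul, mem_center_iff.mp hz g]

theorem comap_center_le_center_of_injective {f : G →* H} (hf : Function.Injective f) :
    (center H).comap f ≤ center G := by
  intro z hz
  rw [mem_center_iff]
  intro g
  apply hf
  rw [map_mul, map_mul, mem_center_iff.mp hz (f g)]

theorem center_eq_bot_of_exact {N : Type*} [Group N] {f : N →* G} {g : G →* H}
    (hf : Function.Injective f) (hg : Function.Surjective g) (hexact : f.range = g.ker)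
    (hN : center N = ⊥) (hH : center H = ⊥) : center G = ⊥ := by
  have hker : center G ≤ f.range := by
    simpa only [hH, MonoidHom.comap_bot, hexact] using center_le_comap_center_of_surjective hg
  have hcomap : (center G).comap f = ⊥ :=
    le_bot_iff.mp (hN ▸ comap_center_le_center_of_injective hf)
  rw [← map_comap_eq_self hker, hcomap, map_bot]

end Subgroup

namespace FreeGroup

variable {α : Type*}

theorem toWord_mul_of_isReduced [DecidableEq α] {x y : FreeGroup α}
    (h : IsReduced (x.toWord ++ y.toWord)) : (x * y).toWord = x.toWord ++ y.toWord := by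
  rw [toWord_mul, h.reduce_eq]

theorem exists_letter_ne_fst_isReduced_pair [Nontrivial α] (p q : α × Bool) :
    ∃ x : α × Bool, x.1 ≠ p.1 ∧ IsReduced [q, x] := by
  by_cases hq : q.1 = p.1
  · obtain ⟨c, hc⟩ := exists_ne p.1
    refine ⟨(c, true), hc, isReduced_cons_cons.mpr ⟨fun h => ?_, .singleton⟩⟩
    exact absurd (hq ▸ h) (Ne.symm hc)
  · exact ⟨q, hq, isReduced_cons_cons.mpr ⟨fun _ => rfl, .singleton⟩⟩

theorem center_eq_bot [Nontrivial α] : Subgroup.center (FreeGroup α) = ⊥ := by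
  classical
  rw [Subgroup.eq_bot_iff_forall]
  intro w hw
  by_contra hw1
  have hL : w.toWord ≠ [] := fun h => hw1 (toWord_eq_nil_iff.mp h)
  obtain ⟨p, L₁, hp⟩ := List.exists_cons_of_ne_nil hL
  obtain ⟨L₂, q, hq⟩ : ∃ L₂ q, w.toWord = L₂ ++ [q] :=
    ⟨_, _, (List.dropLast_append_getLast hL).symm⟩
  obtain ⟨x, hxp, hqx⟩ := exists_letter_ne_fst_isReduced_pair p q
  have hxw : (mk [x] * w).toWord = x :: w.toWord := by
    refine toWord_mul_of_isReduced ?_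
    rw [toWord_mk, reduce_singleton, List.singleton_append, hp, isReduced_cons_cons]
    exact ⟨fun h => absurd h hxp, hp ▸ isReduced_toWord⟩
  have hwx : (w * mk [x]).toWord = w.toWord ++ [x] := by
    refine toWord_mul_of_isReduced ?_
    rw [toWord_mk, reduce_singleton, hq]
    exact IsReduced.append_overlap (hq ▸ isReduced_toWord) hqx (List.cons_ne_nil q [])
  have hcomm : x :: w.toWord = w.toWord ++ [x] := by
    rw [← hxw, ← hwx, Subgroup.mem_center_iff.mp hw]
  rw [hp, List.cons_append, List.cons.injEq] at hcomm
  exact hxp (congrArg Prod.fst hcomm.1)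

end FreeGroup

/-- If `1 → F → G → Q → 1` is a short exact sequence of groups with `F` a free group of
rank at least 2 and `Q` having trivial center, then `G` has trivial center. -/
theorem center_eq_bot_of_ses_free_kernel {S : Type*} {G Q : Type*} [Group G] [Group Q]
    (hS : ∃ a b : S, a ≠ b)
    (f : FreeGroup S →* G) (g : G →* Q)
    (hf : Function.Injective f) (hg : Function.Surjective g)
    (hexact : f.range = g.ker)
    (hQ : Subgroup.center Q = ⊥) :
    Subgroup.center G = ⊥ := by
  have : Nontrivial S := ⟨hS⟩
  exact Subgroup.center_eq_bot_of_exact hf hg hexact FreeGroup.center_eq_bot hQ
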